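/- Let V and W be categories with coproducts, W cocomplete, J a small connected category, and F : J → [GV, GW] a functor sending objects and arrows of J to functors and natural transformations over Set. Then the colimit K of F may be chosen to be over Set; moreover if each Fj is path-like then K is path-like, and if each Fj is distributive then K is distributive. -/

import Mathlib

open CategoryTheory Limits

universe v u w

/-- A `V`-enriched graph: a type of objects together with a hom-object of `V`
for each ordered pair of objects. -/
structure EGraph (V : Type u) [Category.{v} V] : Type (max u (v + 1)) where
  obj : Type v
  hom : obj → obj → V

namespace EGraph

variable {V : Type u} [Category.{v} V] {W : Type w} [Category.{v} W]

/-- Morphisms of enriched graphs. -/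
structure Hom (X Y : EGraph V) : Type (max u v) where
  f : X.obj → Y.obj
  φ : ∀ a b : X.obj, X.hom a b ⟶ Y.hom (f a) (f b)

theorem Hom.ext' {X Y : EGraph V} {F G : Hom X Y} (h : F.f = G.f)
    (h2 : HEq F.φ G.φ) : F = G := by
  cases F; cases G; cases h; cases h2; rfl

instance : Category (EGraph V) where
  Hom := Hom
  id X := ⟨_root_.id, fun a b => 𝟙 _⟩
  comp F G := ⟨G.f ∘ F.f, fun a b => F.φ a b ≫ G.φ _ _⟩
  id_comp F := Hom.ext' rfl (heq_of_eq (by funext a b; exact Category.id_comp _))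
  comp_id F := Hom.ext' rfl (heq_of_eq (by funext a b; exact Category.comp_id _))
  assoc F G H := Hom.ext' rfl (heq_of_eq (by funext a b; exact Category.assoc _ _ _))

/-- The functor `G V ⥤ G W` induced by a functor `V ⥤ W`, applying it to all homs. -/
def mapG (R : V ⥤ W) : EGraph V ⥤ EGraph W where
  obj X := ⟨X.obj, fun a b => R.obj (X.hom a b)⟩
  map F := ⟨F.f, fun a b => R.map (F.φ a b)⟩
  map_id X := Hom.ext' rfl (heq_of_eq (by funext a b; exact R.map_id _))
  map_comp F G := Hom.ext' rfl (heq_of_eq (by funext a b; exact R.map_comp _ _))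

/-- A functor between categories of enriched graphs is *over `Set`* when it commutes
with the object-set functors. -/
def OverSet (T : EGraph V ⥤ EGraph W) : Prop :=
  (∀ X : EGraph V, (T.obj X).obj = X.obj) ∧
    ∀ {X Y : EGraph V} (F : X ⟶ Y), HEq (T.map F).f (Hom.f F)

theorem cast_apply_heq {α α' : Type v} {β β' : Type v} (hα : α = α') (hβ : β = β')
    {f : α → β} {g : α' → β'} (h : HEq f g) (p : α) :
    f p = cast hβ.symm (g (cast hα p)) := by
  subst hα; subst hβ; cases h; simp

theorem map_f_eq (T : EGraph V ⥤ EGraph W) (hT : OverSet T) {X Y : EGraph V}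
    (F : X ⟶ Y) (p : X.obj) :
    (T.map F).f (cast (hT.1 X).symm p) = cast (hT.1 Y).symm (F.f p) := by
  rw [cast_apply_heq (hT.1 X) (hT.1 Y) (hT.2 F)]
  congr 2
  simp

variable [HasInitial V]

noncomputable section

/-- The `V`-graph `(X₁,…,Xₙ)` on objects `{0,…,n}`, with `Xᵢ` as the hom from
`i-1` to `i` and the initial object elsewhere. -/
def seq {n : ℕ} (Xs : Fin n → V) : EGraph V where
  obj := ULift.{v} (Fin (n + 1))
  hom i j := if h : (i.down : ℕ) + 1 = (j.down : ℕ) ∧ (i.down : ℕ) < n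
    then Xs ⟨i.down, h.2⟩ else ⊥_ V

/-- The functor `T̄ₙ` associated to a functor over `Set`. -/
def Tbar (T : EGraph V ⥤ EGraph W) (hT : OverSet T) {n : ℕ} (Xs : Fin n → V) : W :=
  (T.obj (seq Xs)).hom (cast (hT.1 _).symm (ULift.up 0))
    (cast (hT.1 _).symm (ULift.up (Fin.last n)))

/-- The identity-on-objects morphism of sequence graphs induced by a family of maps. -/
def seqHom {n : ℕ} {Xs Ys : Fin n → V} (g : ∀ i, Xs i ⟶ Ys i) : seq Xs ⟶ seq Ys where
  f := _root_.id
  φ a b :=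
    if h : (a.down : ℕ) + 1 = (b.down : ℕ) ∧ (a.down : ℕ) < n then
      eqToHom (dif_pos h) ≫ g ⟨a.down, h.2⟩ ≫
        eqToHom (show Ys ⟨a.down, h.2⟩ = (seq Ys).hom (_root_.id a) (_root_.id b) by
          simp only [seq, id_eq]
          exact (dif_pos (c := ((a.down : ℕ) + 1 = (b.down : ℕ) ∧ (a.down : ℕ) < n))
            (t := fun h' => Ys ⟨a.down, h'.2⟩) (e := fun _ => ⊥_ V) h).symm)
    else eqToHom (show (seq Xs).hom a b = (seq Ys).hom (_root_.id a) (_root_.id b) by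
      simp only [seq, id_eq]
      exact (dif_neg (c := ((a.down : ℕ) + 1 = (b.down : ℕ) ∧ (a.down : ℕ) < n))
        (t := fun h' => Xs ⟨a.down, h'.2⟩) (e := fun _ => ⊥_ V) h).trans
        (dif_neg (c := ((a.down : ℕ) + 1 = (b.down : ℕ) ∧ (a.down : ℕ) < n))
        (t := fun h' => Ys ⟨a.down, h'.2⟩) (e := fun _ => ⊥_ V) h).symm)

/-- The family of maps `update Xs i₀ A ⟶ update Xs i₀ B` which is `g` in
position `i₀` and the identity elsewhere. -/
def updHom {n : ℕ} (Xs : Fin n → V) (i₀ : Fin n) {A B : V} (g : A ⟶ B) :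
    ∀ i, Function.update Xs i₀ A i ⟶ Function.update Xs i₀ B i := fun i =>
  if h : i = i₀ then
    eqToHom (by rw [h, Function.update_self]) ≫ g ≫
      eqToHom (by rw [h, Function.update_self])
  else eqToHom (by rw [Function.update_of_ne h, Function.update_of_ne h])

/-- A functor over `Set` between categories of enriched graphs is *distributive* when
each `T̄ₙ` preserves coproducts in each variable. -/
def Distributive (T : EGraph V ⥤ EGraph W) (hT : OverSet T) : Prop :=
  ∀ (n : ℕ) (i₀ : Fin n) (Xs : Fin n → V) {J : Type v} (Y : J → V)
    (c : Cofan Y) (_ : IsColimit c),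
    Nonempty (IsColimit (Cofan.mk (Tbar T hT (Function.update Xs i₀ c.pt))
      (fun j =>
        (T.map (seqHom (updHom Xs i₀ (c.inj j)))).φ (cast (hT.1 _).symm (ULift.up 0))
            (cast (hT.1 _).symm (ULift.up (Fin.last n))) ≫
          eqToHom (by erw [map_f_eq T hT, map_f_eq T hT]; dsimp only [seqHom, Tbar, id_eq]; rfl))))

/-- The morphism `x̄ : (X(x₀,x₁),…,X(x_{n-1},xₙ)) ⟶ X` associated to a path of
objects of `X`. -/
def pathHom {X : EGraph V} {n : ℕ} (x : Fin (n + 1) → X.obj) :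
    seq (fun i : Fin n => X.hom (x i.castSucc) (x i.succ)) ⟶ X where
  f p := x p.down
  φ a b :=
    if h : (a.down : ℕ) + 1 = (b.down : ℕ) ∧ (a.down : ℕ) < n then
      eqToHom (by
        dsimp only [seq]
        rw [dif_pos h]
        exact congrArg₂ X.hom (congrArg x (Fin.ext (by simp)))
          (congrArg x (Fin.ext (by simpa using h.1))))
    else eqToHom (dif_neg h) ≫ initial.to _

/-- Index type for the paths from `a` to `b` in the graph `X`. -/
def PathIdx (X : EGraph V) (a b : X.obj) : Type v :=
  Σ n : ℕ, { x : Fin (n + 1) → X.obj // x 0 = a ∧ x (Fin.last n) = b }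

/-- A functor over `Set` between categories of enriched graphs is *path-like* when the
canonical maps `∐ T̄ᵢ X(x_{i-1},xᵢ) ⟶ TX(a,b)` are isomorphisms (i.e. exhibit
`TX(a,b)` as the coproduct). -/
def PathLike (T : EGraph V ⥤ EGraph W) (hT : OverSet T) : Prop :=
  ∀ (X : EGraph V) (a b : X.obj),
    Nonempty (IsColimit (Cofan.mk
      ((T.obj X).hom (cast (hT.1 X).symm a) (cast (hT.1 X).symm b))
      (fun p : PathIdx X a b =>
        (T.map (pathHom p.2.1)).φ (cast (hT.1 _).symm (ULift.up 0))
            (cast (hT.1 _).symm (ULift.up (Fin.last p.1))) ≫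
          eqToHom (by
            erw [map_f_eq T hT, map_f_eq T hT]
            exact congrArg₂ _ (congrArg _ p.2.2.1) (congrArg _ p.2.2.2)))))

end
end EGraph

/-!
A functor over `Set` identifies `(T.obj X).obj` with `X.obj` only through an equation, so each
`F j` is first replaced, objectwise, by an isomorphic graph whose object type is `X.obj` on the
nose (`OverSet.strictObj`); transformations over `Set` then become identity-on-objects maps. For
fixed `X` the diagram `j ↦ F j X` is thus a family, indexed by pairs `a b : X.obj`, of
`J`-diagrams of hom objects, and `K X` (`homColimit`) is the graph on `X.obj` whose homs are their
colimits. Since `J` is connected, the legs of any cocone over such a diagram agree on objects,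
which gives the universal property pointwise in `X` and hence in the functor category.
Path-likeness and distributivity say that certain cofans of hom objects are coproducts; they pass
to `K` because colimits commute with coproducts.
-/

namespace CategoryTheory.Limits

variable {C : Type*} [Category C] {J : Type*} [Category J] {I : Type*}

noncomputable def isColimitCofanColimMap {D : I → J ⥤ C} {E : J ⥤ C} [∀ i, HasColimit (D i)]
    [HasColimit E] (ι : ∀ i, D i ⟶ E)
    (h : ∀ j, IsColimit (Cofan.mk (E.obj j) fun i => (ι i).app j)) :
    IsColimit (Cofan.mk (colimit E) fun i => colimMap (ι i)) :=
  have fac {j : J} {A : C} (f : ∀ i, (D i).obj j ⟶ A) (i : I) :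
      (ι i).app j ≫ Cofan.IsColimit.desc (h j) f = f i :=
    Cofan.IsColimit.fac (h j) f i
  Cofan.IsColimit.mk _
    (fun t => colimit.desc E
      { pt := t.pt
        ι :=
          { app j := Cofan.IsColimit.desc (h j) fun i => colimit.ι (D i) j ≫ t.inj i
            naturality j j' d := Cofan.IsColimit.hom_ext (h j) _ _ fun i => by
              change (ι i).app j ≫ E.map d ≫ _ = (ι i).app j ≫ _ ≫ 𝟙 _
              rw [Category.comp_id, ← (ι i).naturality_assoc, fac, fac, colimit.w_assoc] } })
    (fun t i => colimit.hom_ext fun j => by simp [fac])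
    (fun t m hm => colimit.hom_ext fun j => Cofan.IsColimit.hom_ext (h j) _ _ fun i => by
      simp [fac, ← hm i])

lemma colimMap_comp_eqToHom {D D' D'' : J ⥤ C} [HasColimit D] [HasColimit D'] [HasColimit D'']
    (α : D ⟶ D') (h : D' = D'') :
    colimMap (α ≫ eqToHom h) = colimMap α ≫ eqToHom (by subst h; rfl) := by
  subst h
  simp

end CategoryTheory.Limits

universe v₁ u₁

namespace EGraph

variable {V : Type u} [Category.{v} V] {W : Type w} [Category.{v} W]

section Hom

variable {X Y Z : EGraph V}

@[simp] lemma id_f (X : EGraph V) : (𝟙 X : X ⟶ X).f = id := rfl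

@[simp] lemma id_φ (X : EGraph V) (a b : X.obj) : (𝟙 X : X ⟶ X).φ a b = 𝟙 _ := rfl

@[simp] lemma comp_f (F : X ⟶ Y) (G : Y ⟶ Z) : (F ≫ G).f = G.f ∘ F.f := rfl

@[simp] lemma comp_φ (F : X ⟶ Y) (G : Y ⟶ Z) (a b : X.obj) :
    (F ≫ G).φ a b = F.φ a b ≫ G.φ (F.f a) (F.f b) := rfl

lemma Hom.congr_φ {F G : X ⟶ Y} (h : F = G) (a b : X.obj) :
    F.φ a b = G.φ a b ≫ eqToHom (by rw [h]) := by
  subst h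
  simp

lemma Hom.ext_heq {F G : X ⟶ Y} (hf : F.f = G.f) (hφ : ∀ a b, HEq (F.φ a b) (G.φ a b)) :
    F = G := by
  obtain ⟨f, φ⟩ := F
  obtain ⟨g, ψ⟩ := G
  subst hf
  obtain rfl : φ = ψ := funext₂ fun a b => eq_of_heq (hφ a b)
  rfl

lemma Hom.congr_φ_heq {F G : X ⟶ Y} (h : F = G) (a b : X.obj) : HEq (F.φ a b) (G.φ a b) := by
  subst h
  rfl

lemma hom_ext {F G : X ⟶ Y} (hf : ∀ p, F.f p = G.f p)
    (hφ : ∀ a b, F.φ a b ≫ eqToHom (by rw [hf a, hf b]) = G.φ a b) : F = G := by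
  obtain ⟨f, φ⟩ := F
  obtain ⟨g, ψ⟩ := G
  obtain rfl : f = g := funext hf
  obtain rfl : φ = ψ := funext₂ fun a b => by simpa using hφ a b
  rfl

end Hom

lemma cast_heq_id {α β : Type v} (h : α = β) : HEq (cast h) (id : β → β) := by
  subst h
  rfl

abbrev transport (Z : EGraph V) {S : Type v} (e : Z.obj = S) : EGraph V :=
  ⟨S, fun a b => Z.hom (cast e.symm a) (cast e.symm b)⟩

def transportIso (Z : EGraph V) {S : Type v} (e : Z.obj = S) : Z ≅ Z.transport e where
  hom := ⟨cast e, fun p q => eqToHom (by simp [transport])⟩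
  inv := ⟨cast e.symm, fun _ _ => 𝟙 _⟩
  hom_inv_id := hom_ext (fun _ => by simp) fun _ _ => by simp
  inv_hom_id := hom_ext (fun _ => by simp) fun _ _ => by simp

section OverSet

variable {T : EGraph V ⥤ EGraph W} (hT : OverSet T)

abbrev OverSet.strictObj (X : EGraph V) : EGraph W := (T.obj X).transport (hT.1 X)

def OverSet.strictIso (X : EGraph V) : T.obj X ≅ hT.strictObj X :=
  (T.obj X).transportIso (hT.1 X)

def OverSet.strictMap {X Y : EGraph V} (G : X ⟶ Y) : hT.strictObj X ⟶ hT.strictObj Y :=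
  ⟨G.f, fun a b => (T.map G).φ _ _ ≫ eqToHom (by rw [map_f_eq T hT, map_f_eq T hT])⟩

lemma OverSet.strictIso_inv_comp_map {X Y : EGraph V} (G : X ⟶ Y) :
    (hT.strictIso X).inv ≫ T.map G = hT.strictMap G ≫ (hT.strictIso Y).inv :=
  hom_ext (map_f_eq T hT G) fun _ _ => by simp [strictIso, transportIso, strictMap]

lemma OverSet.map_comp_strictIso_hom {X Y : EGraph V} (G : X ⟶ Y) :
    T.map G ≫ (hT.strictIso Y).hom = (hT.strictIso X).hom ≫ hT.strictMap G := by
  rw [← Iso.inv_comp_eq, ← Category.assoc, hT.strictIso_inv_comp_map, Category.assoc,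
    Iso.inv_hom_id, Category.comp_id]

lemma OverSet.strictMap_id (X : EGraph V) : hT.strictMap (𝟙 X) = 𝟙 _ := by
  rw [← cancel_mono (hT.strictIso X).inv, ← hT.strictIso_inv_comp_map, T.map_id,
    Category.id_comp, Category.comp_id]

lemma OverSet.strictMap_comp {X Y Z : EGraph V} (G : X ⟶ Y) (H : Y ⟶ Z) :
    hT.strictMap (G ≫ H) = hT.strictMap G ≫ hT.strictMap H := by
  rw [← cancel_mono (hT.strictIso Z).inv, ← hT.strictIso_inv_comp_map, T.map_comp,
    ← Category.assoc, hT.strictIso_inv_comp_map, Category.assoc, hT.strictIso_inv_comp_map,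
    Category.assoc]

end OverSet

section NatTrans

variable {T T' T'' : EGraph V ⥤ EGraph W}

def IdOnObjects (α : T ⟶ T') : Prop :=
  ∀ X : EGraph V, HEq (α.app X).f (id : X.obj → X.obj)

variable (hT : OverSet T) (hT' : OverSet T') (hT'' : OverSet T'')

def OverSet.strictApp (α : T ⟶ T') (hα : IdOnObjects α) (X : EGraph V) :
    hT.strictObj X ⟶ hT'.strictObj X :=
  ⟨id, fun a b => (α.app X).φ _ _ ≫ eqToHom (by
    rw [cast_apply_heq (hT.1 X) (hT'.1 X) (hα X) (cast _ a),
      cast_apply_heq (hT.1 X) (hT'.1 X) (hα X) (cast _ b)]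
    simp)⟩

variable {hT hT'} in
lemma OverSet.strictIso_inv_comp_app (α : T ⟶ T') (hα : IdOnObjects α) (X : EGraph V) :
    (hT.strictIso X).inv ≫ α.app X = hT.strictApp hT' α hα X ≫ (hT'.strictIso X).inv :=
  hom_ext
    (fun _ => by
      simp [strictIso, transportIso, strictApp, cast_apply_heq (hT.1 X) (hT'.1 X) (hα X)])
    fun _ _ => by simp [strictIso, transportIso, strictApp]

variable {hT hT'} in
lemma OverSet.app_comp_strictIso_hom (α : T ⟶ T') (hα : IdOnObjects α) (X : EGraph V) :
    α.app X ≫ (hT'.strictIso X).hom = (hT.strictIso X).hom ≫ hT.strictApp hT' α hα X := by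
  rw [← Iso.inv_comp_eq, ← Category.assoc, OverSet.strictIso_inv_comp_app, Category.assoc,
    Iso.inv_hom_id, Category.comp_id]

lemma OverSet.strictApp_eq_id {α : T ⟶ T} (h : α = 𝟙 T) (hα : IdOnObjects α) (X : EGraph V) :
    hT.strictApp hT α hα X = 𝟙 _ := by
  rw [← cancel_mono (hT.strictIso X).inv, ← hT.strictIso_inv_comp_app, h, NatTrans.id_app,
    Category.comp_id, Category.id_comp]

lemma OverSet.strictApp_eq_comp {α : T ⟶ T'} {β : T' ⟶ T''} {γ : T ⟶ T''} (h : γ = α ≫ β)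
    (hα : IdOnObjects α) (hβ : IdOnObjects β) (hγ : IdOnObjects γ) (X : EGraph V) :
    hT.strictApp hT'' γ hγ X = hT.strictApp hT' α hα X ≫ hT'.strictApp hT'' β hβ X := by
  rw [← cancel_mono (hT''.strictIso X).inv, ← hT.strictIso_inv_comp_app, h, NatTrans.comp_app,
    ← Category.assoc, hT.strictIso_inv_comp_app, Category.assoc, hT'.strictIso_inv_comp_app,
    Category.assoc]

lemma OverSet.strictMap_comp_strictApp (α : T ⟶ T') (hα : IdOnObjects α) {X Y : EGraph V}
    (G : X ⟶ Y) :
    hT.strictMap G ≫ hT.strictApp hT' α hα Y = hT.strictApp hT' α hα X ≫ hT'.strictMap G := by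
  rw [← cancel_mono (hT'.strictIso Y).inv, Category.assoc, ← hT.strictIso_inv_comp_app,
    ← Category.assoc, ← hT.strictIso_inv_comp_map, Category.assoc, α.naturality,
    ← Category.assoc, hT.strictIso_inv_comp_app, Category.assoc, hT'.strictIso_inv_comp_map,
    Category.assoc]

end NatTrans

section Homwise

variable {J : Type u₁} [Category.{v₁} J] {S : Type v} (D : S → S → J ⥤ W)

abbrev homwiseDiagram : J ⥤ EGraph W where
  obj j := ⟨S, fun a b => (D a b).obj j⟩
  map d := ⟨id, fun a b => (D a b).map d⟩
  map_id _ := hom_ext (fun _ => rfl) fun _ _ => by simp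
  map_comp _ _ := hom_ext (fun _ => rfl) fun _ _ => by simp

variable {D} in
lemma homwiseDiagram_cocone_f_eq [IsPreconnected J] (s : Cocone (homwiseDiagram D))
    (j j' : J) :
    (s.ι.app j).f = (s.ι.app j').f :=
  constant_of_preserves_morphisms (α := S → s.pt.obj) (fun j => (s.ι.app j).f)
    (fun _ _ d => by rw [← s.w d]; rfl) j j'

variable [∀ a b, HasColimit (D a b)]

noncomputable abbrev homwiseCocone : Cocone (homwiseDiagram D) where
  pt := ⟨S, fun a b => colimit (D a b)⟩
  ι := { app j := ⟨id, fun a b => colimit.ι (D a b) j⟩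
         naturality _ _ _ := hom_ext (fun _ => rfl) fun _ _ => by simp }

variable {D} in
abbrev homwiseCoconeDesc [IsPreconnected J] (s : Cocone (homwiseDiagram D)) (j₀ : J)
    (a b : S) : Cocone (D a b) where
  pt := s.pt.hom ((s.ι.app j₀).f a) ((s.ι.app j₀).f b)
  ι := { app j := (s.ι.app j).φ a b ≫ eqToHom (by rw [homwiseDiagram_cocone_f_eq s j j₀]; rfl)
         naturality j j' d := by
           have h : (D a b).map d ≫ (s.ι.app j').φ a b =
               (s.ι.app j).φ a b ≫ eqToHom (by rw [← s.w d]; rfl) :=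
             Hom.congr_φ (s.w d) a b
           simp [reassoc_of% h] }

noncomputable def isColimitHomwiseCocone [IsConnected J] : IsColimit (homwiseCocone D) where
  desc s := ⟨(s.ι.app (Classical.arbitrary J)).f,
    fun a b => colimit.desc (D a b) (homwiseCoconeDesc s (Classical.arbitrary J) a b)⟩
  fac s j := by
    refine hom_ext (congrFun (homwiseDiagram_cocone_f_eq s (Classical.arbitrary J) j))
      fun a b => ?_
    simp
  uniq s m hm := by
    refine hom_ext (fun p => congrFun (congrArg Hom.f (hm _)) p) fun a b =>
      colimit.hom_ext fun j => ?_
    have h : colimit.ι (D a b) j ≫ m.φ a b =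
        (s.ι.app j).φ a b ≫ eqToHom (by rw [← hm j]; rfl) :=
      Hom.congr_φ (hm j) a b
    simp [reassoc_of% h]

end Homwise

section HomColimit

variable {J : Type u₁} [Category.{v₁} J] (F : J ⥤ (EGraph V ⥤ EGraph W))
  (hobj : ∀ j, OverSet (F.obj j))
  (hmap : ∀ {j j' : J} (d : j ⟶ j'), IdOnObjects (F.map d))

def homDiagram (X : EGraph V) (a b : X.obj) : J ⥤ W where
  obj j := ((hobj j).strictObj X).hom a b
  map d := ((hobj _).strictApp (hobj _) (F.map d) (hmap d) X).φ a b
  map_id j := eq_of_heq (Hom.congr_φ_heq ((hobj j).strictApp_eq_id (F.map_id j) (hmap _) X) a b)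
  map_comp d e := eq_of_heq (Hom.congr_φ_heq
    ((hobj _).strictApp_eq_comp (hobj _) (hobj _) (F.map_comp d e) (hmap d) (hmap e) (hmap _) X)
    a b)

def homDiagramMap {X Y : EGraph V} (G : X ⟶ Y) (a b : X.obj) :
    homDiagram F hobj hmap X a b ⟶ homDiagram F hobj hmap Y (G.f a) (G.f b) where
  app j := ((hobj j).strictMap G).φ a b
  naturality j j' d := eq_of_heq (Hom.congr_φ_heq
    ((hobj j).strictMap_comp_strictApp (hobj j') (F.map d) (hmap d) G) a b).symm

lemma homDiagramMap_id (X : EGraph V) (a b : X.obj) :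
    homDiagramMap F hobj hmap (𝟙 X) a b = 𝟙 _ :=
  NatTrans.ext <| funext fun j => eq_of_heq (Hom.congr_φ_heq ((hobj j).strictMap_id X) a b)

lemma homDiagramMap_comp {X Y Z : EGraph V} (G : X ⟶ Y) (H : Y ⟶ Z) (a b : X.obj) :
    homDiagramMap F hobj hmap (G ≫ H) a b =
      homDiagramMap F hobj hmap G a b ≫ homDiagramMap F hobj hmap H (G.f a) (G.f b) :=
  NatTrans.ext <| funext fun j => eq_of_heq (Hom.congr_φ_heq ((hobj j).strictMap_comp G H) a b)

variable [HasColimitsOfShape J W]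

noncomputable def homColimit : EGraph V ⥤ EGraph W where
  obj X := (homwiseCocone (homDiagram F hobj hmap X)).pt
  map G := ⟨G.f, fun a b => colimMap (homDiagramMap F hobj hmap G a b)⟩
  map_id X := Hom.ext_heq rfl fun a b => heq_of_eq <|
    (congrArg colimMap (homDiagramMap_id F hobj hmap X a b)).trans (colim.map_id _)
  map_comp G H := Hom.ext_heq rfl fun a b => heq_of_eq <|
    (congrArg colimMap (homDiagramMap_comp F hobj hmap G H a b)).trans (colim.map_comp _ _)

lemma overSet_homColimit : OverSet (homColimit F hobj hmap) :=
  ⟨fun _ => rfl, fun _ => HEq.rfl⟩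

noncomputable def homColimitInj (j : J) (X : EGraph V) :
    (hobj j).strictObj X ⟶ (homColimit F hobj hmap).obj X :=
  ⟨id, fun a b => colimit.ι (homDiagram F hobj hmap X a b) j⟩

lemma strictMap_comp_homColimitInj (j : J) {X Y : EGraph V} (G : X ⟶ Y) :
    (hobj j).strictMap G ≫ homColimitInj F hobj hmap j Y =
      homColimitInj F hobj hmap j X ≫ (homColimit F hobj hmap).map G :=
  Hom.ext_heq rfl fun a b => heq_of_eq (ι_colimMap (homDiagramMap F hobj hmap G a b) j).symm

lemma strictApp_comp_homColimitInj {j j' : J} (d : j ⟶ j') (X : EGraph V) :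
    (hobj j).strictApp (hobj j') (F.map d) (hmap d) X ≫ homColimitInj F hobj hmap j' X =
      homColimitInj F hobj hmap j X :=
  Hom.ext_heq rfl fun a b => heq_of_eq <| colimit.w (homDiagram F hobj hmap X a b) d

noncomputable def homColimitCocone : Cocone F where
  pt := homColimit F hobj hmap
  ι :=
    { app j :=
        { app X := ((hobj j).strictIso X).hom ≫ homColimitInj F hobj hmap j X
          naturality X Y G := by
            simp only [Functor.const_obj_obj, Category.assoc]
            rw [← Category.assoc, (hobj j).map_comp_strictIso_hom, Category.assoc,
              strictMap_comp_homColimitInj] }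
      naturality j j' d := by
        ext X : 2
        simp only [Functor.const_obj_obj, Functor.const_obj_map, NatTrans.comp_app,
          Category.comp_id]
        rw [← Category.assoc,
          OverSet.app_comp_strictIso_hom (hT := hobj j) (hT' := hobj j') (F.map d) (hmap d),
          Category.assoc, strictApp_comp_homColimitInj] }

noncomputable def isColimitHomColimitCocone [IsConnected J] :
    IsColimit (homColimitCocone F hobj hmap) :=
  evaluationJointlyReflectsColimits _ fun X =>
    ((IsColimit.precomposeHomEquiv
      (NatIso.ofComponents (F := F ⋙ (evaluation _ _).obj X)
        (G := homwiseDiagram (homDiagram F hobj hmap X)) (fun j => (hobj j).strictIso X)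
        fun d => OverSet.app_comp_strictIso_hom (F.map d) (hmap d) X) _).symm
      (isColimitHomwiseCocone (homDiagram F hobj hmap X))).ofIsoColimit
      (Cocone.ext (Iso.refl _) fun _ => Category.comp_id _)

noncomputable def isColimitHomColimitCofan {I : Type*} {S : I → EGraph V} {X : EGraph V}
    (m : ∀ i, S i ⟶ X) (u v : ∀ i, (S i).obj) {a b : X.obj}
    (hu : ∀ i, (m i).f (u i) = a) (hv : ∀ i, (m i).f (v i) = b)
    (h : ∀ j, IsColimit (Cofan.mk
      (((F.obj j).obj X).hom (cast ((hobj j).1 X).symm a) (cast ((hobj j).1 X).symm b))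
      fun i => ((F.obj j).map (m i)).φ (cast ((hobj j).1 (S i)).symm (u i))
          (cast ((hobj j).1 (S i)).symm (v i)) ≫
        eqToHom (by rw [map_f_eq _ (hobj j), map_f_eq _ (hobj j), hu, hv]))) :
    IsColimit (Cofan.mk (((homColimit F hobj hmap).obj X).hom a b)
      fun i => ((homColimit F hobj hmap).map (m i)).φ (u i) (v i) ≫
        eqToHom (congrArg₂ ((homColimit F hobj hmap).obj X).hom (hu i) (hv i))) :=
  (isColimitCofanColimMap
    (fun i => homDiagramMap F hobj hmap (m i) (u i) (v i) ≫
      eqToHom (congrArg₂ (homDiagram F hobj hmap X) (hu i) (hv i)))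
    fun j => (h j).ofIsoColimit (Cofan.ext (Iso.refl _) fun i => (Category.comp_id _).trans <| by
      change _ = ((hobj j).strictMap (m i)).φ (u i) (v i) ≫
        (eqToHom (congrArg₂ (homDiagram F hobj hmap X) (hu i) (hv i))).app j
      rw [eqToHom_app]
      exact ((Category.assoc _ _ _).trans (congrArg _ (eqToHom_trans _ _))).symm)).ofIsoColimit
    (Cofan.ext (Iso.refl _) fun i => (Category.comp_id _).trans (colimMap_comp_eqToHom _ _))

end HomColimit

theorem colimit_overSet_pathLike_distributive_general
    [HasInitial V] [HasColimits W]
    {J : Type v} [Category.{v} J] [IsConnected J]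
    (F : J ⥤ (EGraph V ⥤ EGraph W))
    (hobj : ∀ j : J, OverSet (F.obj j))
    (hmap : ∀ {j j' : J} (d : j ⟶ j') (X : EGraph V),
      HEq ((F.map d).app X).f (_root_.id : X.obj → X.obj)) :
    ∃ c : Limits.Cocone F, Nonempty (Limits.IsColimit c) ∧
      ∃ hc : OverSet c.pt,
        (∀ (j : J) (X : EGraph V),
          HEq ((c.ι.app j).app X).f (_root_.id : X.obj → X.obj)) ∧
        ((∀ j : J, PathLike (F.obj j) (hobj j)) → PathLike c.pt hc) ∧
        ((∀ j : J, Distributive (F.obj j) (hobj j)) → Distributive c.pt hc) := by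
  refine ⟨homColimitCocone F hobj hmap, ⟨isColimitHomColimitCocone F hobj hmap⟩,
    overSet_homColimit F hobj hmap, fun j X => cast_heq_id ((hobj j).1 X),
    fun hPL X a b => ⟨?_⟩, fun hD n i₀ Xs I Y c hc => ⟨?_⟩⟩
  · exact isColimitHomColimitCofan F hobj hmap (fun p : PathIdx X a b => pathHom p.2.1)
      (fun _ => ULift.up 0) (fun p => ULift.up (Fin.last p.1)) (fun p => p.2.2.1)
      (fun p => p.2.2.2) fun j => (hPL j X a b).some
  · exact isColimitHomColimitCofan F hobj hmap (fun i => seqHom (updHom Xs i₀ (c.inj i)))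
      (fun _ => ULift.up 0) (fun _ => ULift.up (Fin.last n)) (fun _ => rfl) (fun _ => rfl)
      fun j => (hD j n i₀ Xs Y c hc).some

/-- Let `V` and `W` be categories with coproducts, `W` cocomplete,
`J` a small connected category, and `F : J ⥤ [GV, GW]` a functor sending objects and
arrows of `J` to functors and natural transformations over `Set`.  Then the colimit `K`
of `F` may be chosen to be over `Set` (with colimit cocone whose components are
identities on objects); moreover if each `F j` is path-like then `K` is path-like, and
if each `F j` is distributive then `K` is distributive. -/
theorem colimit_overSet_pathLike_distributive
    [HasInitial V] [HasInitial W] [HasCoproducts.{v} V] [HasColimits W]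
    {J : Type v} [Category.{v} J] [IsConnected J]
    (F : J ⥤ (EGraph V ⥤ EGraph W))
    (hobj : ∀ j : J, OverSet (F.obj j))
    (hmap : ∀ {j j' : J} (d : j ⟶ j') (X : EGraph V),
      HEq ((F.map d).app X).f (_root_.id : X.obj → X.obj)) :
    ∃ c : Limits.Cocone F, Nonempty (Limits.IsColimit c) ∧
      ∃ hc : OverSet c.pt,
        (∀ (j : J) (X : EGraph V),
          HEq ((c.ι.app j).app X).f (_root_.id : X.obj → X.obj)) ∧
        ((∀ j : J, PathLike (F.obj j) (hobj j)) → PathLike c.pt hc) ∧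
        ((∀ j : J, Distributive (F.obj j) (hobj j)) → Distributive c.pt hc) :=
  colimit_overSet_pathLike_distributive_general F hobj hmap

end EGraph
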